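/- Let a₁, a₂ > 0, n ≥ 1 and τ ∈ ℝ. Let X̂₁, X̂₂ be real random variables that are (a₁, n)-concentrated around m₁ and m₂ respectively with m₁ < m₂, and let Ŷ₃ be a real random variable that is (a₂, n)-concentrated around m₃ with m₃ > τ. Then P( √a₁·(X̂₁ − X̂₂) ≥ √a₂·(Ŷ₃ − τ) ) ≤ 6·exp( −(n/9)·( √a₂(m₃ − τ) + √a₁(m₂ − m₁) )² ). -/

import Mathlib

open MeasureTheory Real

/-- A real random variable `X` on `(Ω, P)` is `(a, n)`-concentrated around `m` if
`P(|X − m| ≥ Δ) ≤ 2·exp(−a·n·Δ²)` for every `Δ > 0`. -/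
def ConcentratedAround {Ω : Type*} [MeasurableSpace Ω] (P : Measure Ω)
    (a : ℝ) (n : ℕ) (X : Ω → ℝ) (m : ℝ) : Prop :=
  ∀ Δ : ℝ, 0 < Δ →
    P {ω | Δ ≤ |X ω - m|} ≤ ENNReal.ofReal (2 * Real.exp (-(a * n * Δ ^ 2)))

/-
Put `G = √a₂(m₃ − τ) + √a₁(m₂ − m₁) > 0`. The crossing gap decomposes as
`√a₂(Ŷ₃ − τ) − √a₁(X̂₁ − X̂₂) = G + √a₂(Ŷ₃ − m₃) − √a₁(X̂₁ − m₁) + √a₁(X̂₂ − m₂)`,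
so on the crossing event one of the three rescaled deviations is at least `G/3`.
Measured in the units `√a`, each estimate deviates by `ε` with probability at most
`2·exp(−n ε²)`, and a union bound with `ε = G/3` gives the claim.
-/

theorem ConcentratedAround.measure_le_abs_sqrt_mul_le {Ω : Type*} [MeasurableSpace Ω]
    {P : Measure Ω} {a : ℝ} {n : ℕ} {X : Ω → ℝ} {m : ℝ} (h : ConcentratedAround P a n X m)
    (ha : 0 < a) {ε : ℝ} (hε : 0 < ε) :
    P {ω | ε ≤ |√a * (X ω - m)|} ≤ ENNReal.ofReal (2 * exp (-(n * ε ^ 2))) := by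
  have hsa : 0 < √a := sqrt_pos.mpr ha
  have hset : {ω | ε ≤ |√a * (X ω - m)|} = {ω | ε / √a ≤ |X ω - m|} := by
    ext ω
    simp only [Set.mem_ofPred_eq, abs_mul, abs_of_pos hsa, div_le_iff₀' hsa]
  have hexp : a * n * (ε / √a) ^ 2 = n * ε ^ 2 := by
    rw [div_pow, sq_sqrt ha.le]
    field_simp
  rw [hset, ← hexp]
  exact h _ (div_pos hε hsa)

theorem third_le_abs_deviation_of_crossing {s t τ m₁ m₂ m₃ x₁ x₂ y : ℝ}
    (h : t * (y - τ) ≤ s * (x₁ - x₂)) :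
    (t * (m₃ - τ) + s * (m₂ - m₁)) / 3 ≤ |s * (x₁ - m₁)| ∨
      (t * (m₃ - τ) + s * (m₂ - m₁)) / 3 ≤ |s * (x₂ - m₂)| ∨
      (t * (m₃ - τ) + s * (m₂ - m₁)) / 3 ≤ |t * (y - m₃)| := by
  by_contra! hlt
  obtain ⟨h₁, h₂, h₃⟩ := hlt
  linarith [(abs_lt.mp h₁).2, (abs_lt.mp h₂).1, (abs_lt.mp h₃).1]

theorem prob_gap_crossing_le {Ω : Type*} [MeasurableSpace Ω] (P : Measure Ω)
    (a₁ a₂ : ℝ) (n : ℕ) (ha₁ : 0 < a₁) (ha₂ : 0 < a₂)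
    (τ m₁ m₂ m₃ : ℝ) (hm : m₁ < m₂) (hm₃ : τ < m₃) (X₁ X₂ Y₃ : Ω → ℝ)
    (hX₁ : ConcentratedAround P a₁ n X₁ m₁) (hX₂ : ConcentratedAround P a₁ n X₂ m₂)
    (hY₃ : ConcentratedAround P a₂ n Y₃ m₃) :
    P {ω | Real.sqrt a₂ * (Y₃ ω - τ) ≤ Real.sqrt a₁ * (X₁ ω - X₂ ω)}
      ≤ ENNReal.ofReal (6 * Real.exp (-((n : ℝ) / 9 *
          (Real.sqrt a₂ * (m₃ - τ) + Real.sqrt a₁ * (m₂ - m₁)) ^ 2))) := by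
  set G := √a₂ * (m₃ - τ) + √a₁ * (m₂ - m₁)
  have hG : 0 < G / 3 := by
    have := mul_pos (sqrt_pos.mpr ha₂) (sub_pos.mpr hm₃)
    have := mul_pos (sqrt_pos.mpr ha₁) (sub_pos.mpr hm)
    positivity
  have hcover : {ω | √a₂ * (Y₃ ω - τ) ≤ √a₁ * (X₁ ω - X₂ ω)} ⊆
      {ω | G / 3 ≤ |√a₁ * (X₁ ω - m₁)|} ∪
        ({ω | G / 3 ≤ |√a₁ * (X₂ ω - m₂)|} ∪ {ω | G / 3 ≤ |√a₂ * (Y₃ ω - m₃)|}) :=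
    fun ω hω => third_le_abs_deviation_of_crossing hω
  have hexp : (n : ℝ) / 9 * G ^ 2 = n * (G / 3) ^ 2 := by ring
  calc _ ≤ _ := measure_mono hcover
    _ ≤ P {ω | G / 3 ≤ |√a₁ * (X₁ ω - m₁)|} + (P {ω | G / 3 ≤ |√a₁ * (X₂ ω - m₂)|} +
          P {ω | G / 3 ≤ |√a₂ * (Y₃ ω - m₃)|}) :=
        (measure_union_le _ _).trans (add_le_add_right (measure_union_le _ _) _)
    _ ≤ _ := add_le_add (hX₁.measure_le_abs_sqrt_mul_le ha₁ hG)
        (add_le_add (hX₂.measure_le_abs_sqrt_mul_le ha₁ hG)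
          (hY₃.measure_le_abs_sqrt_mul_le ha₂ hG))
    _ = _ := by
        rw [hexp, ← ENNReal.ofReal_add (by positivity) (by positivity),
          ← ENNReal.ofReal_add (by positivity) (by positivity)]
        ring_nf
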